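/- For any vector s ∈ ℝ^n (n ≥ 1) and τ > 0, the gap between the maximum and the softmax-weighted average is bounded: 0 ≤ max_i s_i − ∑_i σ_i s_i ≤ 2τ·log n, where σ is the softmax of s at temperature τ. -/

import Mathlib

/-!
The entropy of the softmax distribution is `log Z - ∑ σᵢ sᵢ / τ` with `Z = ∑ₖ exp (sₖ / τ)`,
and `τ log Z ≥ max s`. Hence `max s - ∑ σᵢ sᵢ ≤ τ H(σ)`, and `H(σ) ≤ log n` by Jensen's
inequality for the concave function `negMulLog`.
-/

open Real Finset

namespace Real

variable {ι : Type*} [Fintype ι]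

theorem sum_negMulLog_le_log_card {p : ι → ℝ} (hp : ∀ i, 0 ≤ p i) (hsum : ∑ i, p i = 1) :
    ∑ i, negMulLog (p i) ≤ log (Fintype.card ι) := by
  have hcard : (0 : ℝ) < Fintype.card ι := by
    have : Nonempty ι := by
      by_contra h
      simp [not_nonempty_iff.mp h] at hsum
    exact_mod_cast Fintype.card_pos
  have jensen := concaveOn_negMulLog.le_map_sum (t := univ) (w := fun _ => (Fintype.card ι : ℝ)⁻¹)
    (p := p) (fun _ _ => by positivity) (by simp [hcard.ne']) (fun i _ => hp i)
  have huniform :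
      negMulLog (Fintype.card ι : ℝ)⁻¹ = (Fintype.card ι : ℝ)⁻¹ * log (Fintype.card ι) := by
    rw [negMulLog, log_inv]
    ring
  simp only [smul_eq_mul, ← mul_sum, hsum, mul_one, huniform] at jensen
  rwa [inv_mul_le_iff₀ hcard, mul_inv_cancel_left₀ hcard.ne'] at jensen

noncomputable def softmax (τ : ℝ) (s : ι → ℝ) (i : ι) : ℝ :=
  exp (s i / τ) / ∑ k, exp (s k / τ)

theorem softmax_nonneg (τ : ℝ) (s : ι → ℝ) (i : ι) : 0 ≤ softmax τ s i := by
  unfold softmax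
  positivity

theorem le_mul_log_sum_exp {τ : ℝ} (hτ : 0 < τ) (s : ι → ℝ) (j : ι) :
    s j ≤ τ * log (∑ k, exp (s k / τ)) := by
  have : s j / τ ≤ log (∑ k, exp (s k / τ)) := by
    rw [le_log_iff_exp_le (sum_pos (fun k _ => exp_pos _) ⟨j, mem_univ j⟩)]
    exact single_le_sum (f := fun k => exp (s k / τ)) (fun k _ => (exp_pos _).le) (mem_univ j)
  rwa [div_le_iff₀' hτ] at this

variable [Nonempty ι]

theorem sum_softmax (τ : ℝ) (s : ι → ℝ) : ∑ i, softmax τ s i = 1 := by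
  simp only [softmax, ← sum_div]
  exact div_self (sum_pos (fun i _ => exp_pos _) univ_nonempty).ne'

theorem log_softmax (τ : ℝ) (s : ι → ℝ) (i : ι) :
    log (softmax τ s i) = s i / τ - log (∑ k, exp (s k / τ)) := by
  rw [softmax, log_div (exp_pos _).ne' (sum_pos (fun k _ => exp_pos _) univ_nonempty).ne',
    log_exp]

theorem sum_softmax_mul_le {τ c : ℝ} {s : ι → ℝ} (hs : ∀ i, s i ≤ c) :
    ∑ i, softmax τ s i * s i ≤ c :=
  calc ∑ i, softmax τ s i * s i ≤ ∑ i, softmax τ s i * c :=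
        sum_le_sum fun i _ => mul_le_mul_of_nonneg_left (hs i) (softmax_nonneg τ s i)
    _ = c := by rw [← sum_mul, sum_softmax, one_mul]

theorem mul_sum_negMulLog_softmax {τ : ℝ} (hτ : τ ≠ 0) (s : ι → ℝ) :
    τ * ∑ i, negMulLog (softmax τ s i) =
      τ * log (∑ k, exp (s k / τ)) - ∑ i, softmax τ s i * s i := by
  have hterm : ∀ i, τ * negMulLog (softmax τ s i) =
      softmax τ s i * (τ * log (∑ k, exp (s k / τ))) - softmax τ s i * s i := by
    intro i
    rw [negMulLog, log_softmax]
    field_simp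
    ring
  rw [mul_sum, sum_congr rfl fun i _ => hterm i, sum_sub_distrib, ← sum_mul, sum_softmax, one_mul]

end Real

/-- Gap between the max and the softmax-weighted average: 0 ≤ max s − ∑ σ_i s_i ≤ 2τ log n. -/
theorem softmax_max_gap (n : ℕ) (hn : 1 ≤ n) (s : Fin n → ℝ) (τ : ℝ) (hτ : 0 < τ) :
    let σ : Fin n → ℝ := fun i => Real.exp (s i / τ) / ∑ k, Real.exp (s k / τ)
    let M : ℝ := Finset.univ.sup'
      (by simpa [Finset.univ_nonempty_iff] using Fin.pos_iff_nonempty.mp hn) s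
    0 ≤ M - ∑ i, σ i * s i ∧ M - ∑ i, σ i * s i ≤ 2 * τ * Real.log n := by
  intro σ M
  have : Nonempty (Fin n) := ⟨⟨0, hn⟩⟩
  change 0 ≤ M - ∑ i, softmax τ s i * s i ∧ M - ∑ i, softmax τ s i * s i ≤ 2 * τ * log n
  refine ⟨sub_nonneg.2 (sum_softmax_mul_le fun i => le_sup' s (mem_univ i)), ?_⟩
  have hM : M ≤ τ * log (∑ k, exp (s k / τ)) := sup'_le _ s fun j _ => le_mul_log_sum_exp hτ s j
  have hentropy : ∑ i, negMulLog (softmax τ s i) ≤ log n := by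
    simpa using sum_negMulLog_le_log_card (softmax_nonneg τ s) (sum_softmax τ s)
  have hlogn : 0 ≤ log n := log_natCast_nonneg n
  calc M - ∑ i, softmax τ s i * s i
      ≤ τ * log (∑ k, exp (s k / τ)) - ∑ i, softmax τ s i * s i := by linarith
    _ = τ * ∑ i, negMulLog (softmax τ s i) := (mul_sum_negMulLog_softmax hτ.ne' s).symm
    _ ≤ τ * log n := mul_le_mul_of_nonneg_left hentropy hτ.le
    _ ≤ 2 * τ * log n := by nlinarith
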